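/- arXiv:1203.6396 — 2 statements merged into one kernel-verified Lean document; each statement's English description precedes it below -/
import Mathlib

section
/- Let Y and Y′ be random variables with finitely many values on a common probability space, taking values in sets S and T respectively. Then H(Y′) − H(Y) ≥ −log₂( ∑_{y′∈T} P(Y′=y′) · ∑_{y∈S : P(Y=y)>0} P(Y′=y′, Y=y)/P(Y=y) ). -/
/-!
Write `p`, `q` for the laws of `Y`, `Y'` and `f` for their joint law. Since `p` and `q` are the
marginals of `f`, both entropies are averages against `f`, and
`H(Y') - H(Y) = -∑ f(y', y) log₂ (q(y') / p(y))`. Jensen's inequality for the concave `log₂`,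
with weights `f`, bounds `∑ f log₂ (q / p)` by `log₂ ∑ f q / p`, which is the sum in the statement.
-/

open scoped BigOperators
open Classical

noncomputable section

/-- A finite probability space: a probability mass function on a finite type. -/
structure FinProb (Ω : Type*) [Fintype Ω] where
  p : Ω → ℝ
  nonneg : ∀ ω, 0 ≤ p ω
  sum_one : ∑ ω, p ω = 1

variable {Ω : Type*} [Fintype Ω]

/-- Probability of an event. -/
def pr (μ : FinProb Ω) (E : Ω → Prop) : ℝ :=
  ∑ ω, if E ω then μ.p ω else 0

/-- Shannon entropy (base 2) of a random variable with finitely many values. -/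
def entropy {S : Type*} (μ : FinProb Ω) (U : Ω → S) : ℝ :=
  -∑ u ∈ Finset.univ.image U,
    pr μ (fun ω => U ω = u) * Real.logb 2 (pr μ (fun ω => U ω = u))

/-- Conditional Shannon entropy `H(U | V)`. -/
def condEntropy {S T : Type*} (μ : FinProb Ω) (U : Ω → S) (V : Ω → T) : ℝ :=
  ∑ v ∈ (Finset.univ.image V).filter (fun v => 0 < pr μ (fun ω => V ω = v)),
    pr μ (fun ω => V ω = v) *
      (-∑ u ∈ Finset.univ.image U,
        (pr μ (fun ω => U ω = u ∧ V ω = v) / pr μ (fun ω => V ω = v)) *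
          Real.logb 2 (pr μ (fun ω => U ω = u ∧ V ω = v) / pr μ (fun ω => V ω = v)))

/-- Mutual information `I(U;V) = H(U) - H(U|V)`. -/
def mutualInfo {S T : Type*} (μ : FinProb Ω) (U : Ω → S) (V : Ω → T) : ℝ :=
  entropy μ U - condEntropy μ U V

/-- Expected length of a list-valued random variable. -/
def expLen {A : Type*} (μ : FinProb Ω) (Y : Ω → List A) : ℝ :=
  ∑ ω, μ.p ω * (Y ω).length

lemma pr_nonneg (μ : FinProb Ω) (E : Ω → Prop) : 0 ≤ pr μ E :=
  Finset.sum_nonneg fun ω _ => by split_ifs <;> simp [μ.nonneg ω]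

lemma sum_pr_and_eq {T : Type*} [Fintype T] (μ : FinProb Ω) (E : Ω → Prop) (V : Ω → T) :
    ∑ v : T, pr μ (fun ω => E ω ∧ V ω = v) = pr μ E := by
  simp only [pr]
  rw [Finset.sum_comm]
  refine Finset.sum_congr rfl fun ω _ => ?_
  by_cases hE : E ω <;> simp [hE]

lemma sum_pr_eq_one {S : Type*} [Fintype S] (μ : FinProb Ω) (U : Ω → S) :
    ∑ u : S, pr μ (fun ω => U ω = u) = 1 := by
  simpa [pr, μ.sum_one] using sum_pr_and_eq μ (fun _ => True) U

lemma entropy_eq_neg_sum {S : Type*} [Fintype S] (μ : FinProb Ω) (U : Ω → S) :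
    entropy μ U = -∑ u : S,
      pr μ (fun ω => U ω = u) * Real.logb 2 (pr μ (fun ω => U ω = u)) := by
  refine congrArg Neg.neg (Finset.sum_subset (Finset.subset_univ _) fun u _ hu => ?_)
  have hpr : pr μ (fun ω => U ω = u) = 0 :=
    Finset.sum_eq_zero fun ω _ =>
      if_neg fun h : U ω = u => hu (h ▸ Finset.mem_image_of_mem U (Finset.mem_univ ω))
  simp [hpr]

namespace Real

lemma concaveOn_logb_Ioi {b : ℝ} (hb : 1 < b) : ConcaveOn ℝ (Set.Ioi 0) (logb b) := by
  have hlogb : logb b = fun x => (log b)⁻¹ • log x :=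
    funext fun x => by rw [smul_eq_mul, logb, div_eq_inv_mul]
  exact hlogb ▸ strictConcaveOn_log_Ioi.concaveOn.smul (inv_nonneg.2 (log_pos hb).le)

lemma sum_mul_logb_le_logb_sum_mul {ι : Type*} (s : Finset ι) {b : ℝ} (hb : 1 < b)
    (w x : ι → ℝ) (hw : ∀ i ∈ s, 0 ≤ w i) (hw₁ : ∑ i ∈ s, w i = 1)
    (hx : ∀ i ∈ s, w i ≠ 0 → 0 < x i) :
    ∑ i ∈ s, w i * logb b (x i) ≤ logb b (∑ i ∈ s, w i * x i) := by
  have key := (concaveOn_logb_Ioi hb).le_map_sum (t := s.filter (w · ≠ 0)) (w := w) (p := x)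
    (fun i hi => hw i (Finset.mem_of_mem_filter i hi))
    (by rw [Finset.sum_filter_ne_zero, hw₁])
    (fun i hi => hx i (Finset.mem_of_mem_filter i hi) (Finset.mem_filter.1 hi).2)
  simp only [smul_eq_mul] at key
  rwa [Finset.sum_filter_of_ne (fun i _ h => left_ne_zero_of_mul h),
    Finset.sum_filter_of_ne (fun i _ h => left_ne_zero_of_mul h)] at key

end Real

lemma sum_mul_logb_sub_sum_mul_logb_le {S T : Type*} [Fintype S] [Fintype T] {b : ℝ} (hb : 1 < b)
    (f : T → S → ℝ) (q : T → ℝ) (p : S → ℝ) (hf : ∀ y' y, 0 ≤ f y' y)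
    (hq : ∀ y', ∑ y, f y' y = q y') (hp : ∀ y, ∑ y', f y' y = p y) (hq₁ : ∑ y', q y' = 1) :
    ∑ y', q y' * Real.logb b (q y') - ∑ y, p y * Real.logb b (p y) ≤
      Real.logb b (∑ y', q y' * ∑ y ∈ Finset.univ.filter (fun y => 0 < p y), f y' y / p y) := by
  have f_le_q : ∀ y' y, f y' y ≤ q y' := fun y' y =>
    hq y' ▸ Finset.single_le_sum (fun y _ => hf y' y) (Finset.mem_univ y)
  have f_le_p : ∀ y' y, f y' y ≤ p y := fun y' y =>
    hp y ▸ Finset.single_le_sum (fun y' _ => hf y' y) (Finset.mem_univ y')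
  have pos_of_ne : ∀ y' y, f y' y ≠ 0 → 0 < q y' ∧ 0 < p y := fun y' y h =>
    have hpos := lt_of_le_of_ne (hf y' y) (Ne.symm h)
    ⟨hpos.trans_le (f_le_q y' y), hpos.trans_le (f_le_p y' y)⟩
  have jensen := Real.sum_mul_logb_le_logb_sum_mul Finset.univ hb
    (fun z : T × S => f z.1 z.2) (fun z => q z.1 / p z.2) (fun z _ => hf z.1 z.2)
    (by rw [Fintype.sum_prod_type']; simp only [hq, hq₁])
    (fun z _ h => div_pos (pos_of_ne z.1 z.2 h).1 (pos_of_ne z.1 z.2 h).2)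
  rw [Fintype.sum_prod_type' (fun y' y => f y' y * Real.logb b (q y' / p y)),
    Fintype.sum_prod_type' (fun y' y => f y' y * (q y' / p y))] at jensen
  have hlog : ∀ y' y, f y' y * Real.logb b (q y' / p y) =
      f y' y * Real.logb b (q y') - f y' y * Real.logb b (p y) := fun y' y => by
    by_cases h : f y' y = 0
    · simp [h]
    · rw [Real.logb_div (pos_of_ne y' y h).1.ne' (pos_of_ne y' y h).2.ne', mul_sub]
  have lhs : ∑ y', ∑ y, f y' y * Real.logb b (q y' / p y) =
      ∑ y', q y' * Real.logb b (q y') - ∑ y, p y * Real.logb b (p y) := by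
    simp only [hlog, Finset.sum_sub_distrib, ← Finset.sum_mul, hq]
    rw [Finset.sum_comm]
    simp only [← Finset.sum_mul, hp]
  have rhs : ∑ y', ∑ y, f y' y * (q y' / p y) =
      ∑ y', q y' * ∑ y ∈ Finset.univ.filter (fun y => 0 < p y), f y' y / p y := by
    refine Finset.sum_congr rfl fun y' _ => ?_
    rw [Finset.sum_filter_of_ne, Finset.mul_sum]
    · exact Finset.sum_congr rfl fun y _ => by ring
    · exact fun y _ h => (pos_of_ne y' y (div_ne_zero_iff.1 h).1).2
  rwa [lhs, rhs] at jensen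

/-- `H(Y') − H(Y) ≥ −log₂(∑_{y'} P(Y'=y') ∑_{y : P(Y=y)>0} P(Y'=y', Y=y)/P(Y=y))`. -/
theorem stmt1 {Ω S T : Type*} [Fintype Ω] [Fintype S] [Fintype T] (μ : FinProb Ω)
    (Y : Ω → S) (Y' : Ω → T) :
    entropy μ Y' - entropy μ Y ≥
      -Real.logb 2 (∑ y' : T, pr μ (fun ω => Y' ω = y') *
        ∑ y ∈ Finset.univ.filter (fun y : S => 0 < pr μ (fun ω => Y ω = y)),
          pr μ (fun ω => Y' ω = y' ∧ Y ω = y) / pr μ (fun ω => Y ω = y)) := by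
  have h := sum_mul_logb_sub_sum_mul_logb_le one_lt_two
    (fun y' y => pr μ (fun ω => Y' ω = y' ∧ Y ω = y)) (fun y' => pr μ (fun ω => Y' ω = y'))
    (fun y => pr μ (fun ω => Y ω = y)) (fun _ _ => pr_nonneg μ _)
    (fun y' => sum_pr_and_eq μ _ Y)
    (fun y => by simpa only [and_comm] using sum_pr_and_eq μ (fun ω => Y ω = y) Y')
    (sum_pr_eq_one μ Y')
  rw [entropy_eq_neg_sum, entropy_eq_neg_sum]
  exact (neg_le_neg h).trans_eq (by ring)

end
end

section
/- Let p_s, p_e ≥ 0 with p_s + p_e ≤ 1 and let W be the substitution/erasure kernel. Let X be a random variable with finitely many values, Y a random variable taking finitely many values in lists over {0,1}, and Y^(3) a random variable taking values in lists over {0,1,★} with |Y^(3)| = |Y| pointwise, such that P(Y^(3)=y′ | X=x, Y=y) = ∏_{i=1}^{|y|} W(y_i, y′_i) whenever P(X=x, Y=y) > 0 and |y′| = |y|. Then H(Y^(3) | X) ≤ H(Y | X) + E[|Y|] · H(p_e, p_s, 1−p_e−p_s), where H(p_e, p_s, 1−p_e−p_s) = −p_e log₂ p_e − p_s log₂ p_s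 − (1−p_s−p_e) log₂(1−p_s−p_e). -/
open scoped BigOperators
open Classical

noncomputable section

variable {Ω : Type*} [Fintype Ω]

/-- The substitution/erasure kernel on input alphabet `{0,1}` (modeled as `Bool`)
and output alphabet `{0,1,★}` (modeled as `Option Bool`, with `none` the erasure `★`):
`W b b = 1 - ps - pe`, `W b (1-b) = ps`, `W b ★ = pe`. -/
def subErsKernel (ps pe : ℝ) : Bool → Option Bool → ℝ :=
  fun b c => match c with
  | none => pe
  | some c' => if c' = b then 1 - ps - pe else ps

/-! ### Auxiliary lemmas -/

/-- `f2 t = -(t log₂ t)`. -/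
noncomputable def f2 (t : ℝ) : ℝ := -(t * Real.logb 2 t)

lemma f2_zero : f2 0 = 0 := by simp [f2]

lemma f2_nonneg {t : ℝ} (h0 : 0 ≤ t) (h1 : t ≤ 1) : 0 ≤ f2 t := by
  have h := Real.logb_nonpos (b := 2) (by norm_num) h0 h1
  have : t * Real.logb 2 t ≤ 0 := mul_nonpos_of_nonneg_of_nonpos h0 h
  simpa [f2] using this

lemma f2_mul {a b : ℝ} (ha : 0 ≤ a) (hb : 0 ≤ b) :
    f2 (a * b) = b * f2 a + a * f2 b := by
  rcases eq_or_lt_of_le ha with h | h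
  · simp [f2, ← h]
  rcases eq_or_lt_of_le hb with h' | h'
  · simp [f2, ← h']
  simp only [f2, Real.logb_mul h.ne' h'.ne']
  ring

lemma neg_mul_logb_le {r q : ℝ} (hr : 0 ≤ r) (hrq : r ≤ q) :
    -(r * Real.logb 2 q) ≤ f2 r := by
  rcases eq_or_lt_of_le hr with h | h
  · simp [f2, ← h]
  have h1 : Real.logb 2 r ≤ Real.logb 2 q :=
    Real.logb_le_logb_of_le (by norm_num) h hrq
  have h2 : r * Real.logb 2 r ≤ r * Real.logb 2 q :=
    mul_le_mul_of_nonneg_left h1 hr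
  simpa [f2] using neg_le_neg h2

lemma sum_pi_prod {γ : Type*} [Fintype γ] :
    ∀ (n : ℕ) (h : Fin n → γ → ℝ),
      ∑ g : Fin n → γ, ∏ i, h i (g i) = ∏ i, ∑ c, h i c := by
  intro n
  induction n with
  | zero => intro h; simp
  | succ n ih =>
    intro h
    rw [Fintype.sum_equiv (Fin.consEquiv (fun _ : Fin (n+1) => γ)).symm _
      (fun p => h 0 p.1 * ∏ i, h i.succ (p.2 i)) ?_]
    · rw [Fintype.sum_prod_type]
      simp only [← Finset.mul_sum]
      rw [← Finset.sum_mul, ih (fun i c => h i.succ c), Fin.prod_univ_succ]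
    · intro g
      rw [Fin.prod_univ_succ]
      simp [Fin.consEquiv, Fin.tail]

lemma sum_f2_pi {γ : Type*} [Fintype γ] :
    ∀ (n : ℕ) (h : Fin n → γ → ℝ), (∀ i c, 0 ≤ h i c) → (∀ i, ∑ c, h i c = 1) →
      ∑ g : Fin n → γ, f2 (∏ i, h i (g i)) = ∑ i, ∑ c, f2 (h i c) := by
  intro n
  induction n with
  | zero => intro h _ _; simp [f2]
  | succ n ih =>
    intro h h0 h1
    rw [Fintype.sum_equiv (Fin.consEquiv (fun _ : Fin (n+1) => γ)).symm _
      (fun p => f2 (h 0 p.1 * ∏ i, h i.succ (p.2 i))) ?_]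
    · rw [Fintype.sum_prod_type]
      have key : ∀ c : γ, ∑ g : Fin n → γ, f2 (h 0 c * ∏ i, h i.succ (g i))
          = f2 (h 0 c) * (∑ g : Fin n → γ, ∏ i, h i.succ (g i))
            + h 0 c * ∑ g : Fin n → γ, f2 (∏ i, h i.succ (g i)) := by
        intro c
        rw [Finset.mul_sum, Finset.mul_sum, ← Finset.sum_add_distrib]
        refine Finset.sum_congr rfl fun g _ => ?_
        rw [f2_mul (h0 0 c) (Finset.prod_nonneg fun i _ => h0 i.succ (g i))]
        ring
      simp only [key]
      rw [Finset.sum_add_distrib, ← Finset.sum_mul, ← Finset.sum_mul]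
      rw [sum_pi_prod n (fun i c => h i.succ c)]
      rw [ih (fun i c => h i.succ c) (fun i c => h0 i.succ c) (fun i => h1 i.succ)]
      rw [Finset.prod_congr rfl (fun i _ => h1 (Fin.succ i)), Finset.prod_const_one,
        h1 0, Fin.sum_univ_succ]
      ring
    · intro g
      rw [Fin.prod_univ_succ]
      simp [Fin.consEquiv, Fin.tail]

section Kernel

variable {ps pe : ℝ}

lemma W_nonneg (hps : 0 ≤ ps) (hpe : 0 ≤ pe) (hspe : ps + pe ≤ 1) (b : Bool) (c : Option Bool) :
    0 ≤ subErsKernel ps pe b c := by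
  rcases c with _ | c' <;> simp [subErsKernel]
  · exact hpe
  · split <;> linarith

lemma W_le_one (hps : 0 ≤ ps) (hpe : 0 ≤ pe) (hspe : ps + pe ≤ 1) (b : Bool) (c : Option Bool) :
    subErsKernel ps pe b c ≤ 1 := by
  rcases c with _ | c' <;> simp [subErsKernel]
  · linarith
  · split <;> linarith

lemma W_row_sum (b : Bool) : ∑ c : Option Bool, subErsKernel ps pe b c = 1 := by
  rw [Fintype.sum_option]
  cases b <;> simp [subErsKernel, Fintype.sum_bool] <;> ring

lemma W_row_f2 (b : Bool) :
    ∑ c : Option Bool, f2 (subErsKernel ps pe b c) = f2 pe + f2 ps + f2 (1 - ps - pe) := by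
  rw [Fintype.sum_option]
  cases b <;> simp [subErsKernel, Fintype.sum_bool] <;> ring

/-- Kernel on lists. -/
def Kker (ps pe : ℝ) (y : List Bool) (y3 : List (Option Bool)) : ℝ :=
  if y3.length = y.length then (List.zipWith (subErsKernel ps pe) y y3).prod else 0

lemma zipWith_ofFn' {α β γ : Type*} (f : α → β → γ) :
    ∀ (n : ℕ) (a : Fin n → α) (b : Fin n → β),
      List.zipWith f (List.ofFn a) (List.ofFn b) = List.ofFn (fun i => f (a i) (b i)) := by
  intro n
  induction n with
  | zero => intro a b; simp
  | succ n ih => intro a b; simp [List.ofFn_succ, ih]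

lemma Kker_ofFn {n : ℕ} (a : Fin n → Bool) (b : Fin n → Option Bool) :
    Kker ps pe (List.ofFn a) (List.ofFn b) = ∏ i, subErsKernel ps pe (a i) (b i) := by
  rw [Kker, if_pos (by simp), zipWith_ofFn', List.prod_ofFn]

lemma eq_ofFn {α : Type*} (l : List α) (n : ℕ) (h : l.length = n) :
    l = List.ofFn (fun i : Fin n => l.get (Fin.cast h.symm i)) := by
  subst h
  simp [List.ofFn_get]

lemma zipWith_prod_nonneg (hps : 0 ≤ ps) (hpe : 0 ≤ pe) (hspe : ps + pe ≤ 1) :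
    ∀ (y : List Bool) (y3 : List (Option Bool)),
      0 ≤ (List.zipWith (subErsKernel ps pe) y y3).prod := by
  intro y
  induction y with
  | nil => intro y3; simp
  | cons b y ih =>
    intro y3
    rcases y3 with _ | ⟨c, y3⟩
    · simp
    · simpa using mul_nonneg (W_nonneg hps hpe hspe b c) (ih y3)

lemma zipWith_prod_le_one (hps : 0 ≤ ps) (hpe : 0 ≤ pe) (hspe : ps + pe ≤ 1) :
    ∀ (y : List Bool) (y3 : List (Option Bool)),
      (List.zipWith (subErsKernel ps pe) y y3).prod ≤ 1 := by
  intro y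
  induction y with
  | nil => intro y3; simp
  | cons b y ih =>
    intro y3
    rcases y3 with _ | ⟨c, y3⟩
    · simp
    · simpa using mul_le_one₀ (W_le_one hps hpe hspe b c)
        (zipWith_prod_nonneg hps hpe hspe y y3) (ih y3)

lemma Kker_nonneg (hps : 0 ≤ ps) (hpe : 0 ≤ pe) (hspe : ps + pe ≤ 1)
    (y : List Bool) (y3 : List (Option Bool)) : 0 ≤ Kker ps pe y y3 := by
  unfold Kker
  split
  · exact zipWith_prod_nonneg hps hpe hspe y y3
  · exact le_refl 0

lemma Kker_le_one (hps : 0 ≤ ps) (hpe : 0 ≤ pe) (hspe : ps + pe ≤ 1)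
    (y : List Bool) (y3 : List (Option Bool)) : Kker ps pe y y3 ≤ 1 := by
  unfold Kker
  split
  · exact zipWith_prod_le_one hps hpe hspe y y3
  · norm_num

lemma Kker_sum_le (hps : 0 ≤ ps) (hpe : 0 ≤ pe) (hspe : ps + pe ≤ 1)
    {n : ℕ} (a : Fin n → Bool) (T3 : Finset (List (Option Bool))) :
    ∑ y3 ∈ T3, Kker ps pe (List.ofFn a) y3 ≤ 1 := by
  have hfil : ∑ y3 ∈ T3.filter (fun l => l.length = n), Kker ps pe (List.ofFn a) y3
      = ∑ y3 ∈ T3, Kker ps pe (List.ofFn a) y3 := by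
    refine Finset.sum_filter_of_ne fun y3 _ hne => ?_
    by_contra hl
    exact hne (by rw [Kker, if_neg (by simpa using hl)])
  rw [← hfil]
  have hsub : T3.filter (fun l => l.length = n) ⊆
      Finset.univ.image (List.ofFn : (Fin n → Option Bool) → List (Option Bool)) := by
    intro l hl
    rw [Finset.mem_filter] at hl
    exact Finset.mem_image.2 ⟨fun i => l.get (Fin.cast hl.2.symm i), Finset.mem_univ _,
      (eq_ofFn l n hl.2).symm⟩
  calc ∑ y3 ∈ T3.filter (fun l => l.length = n), Kker ps pe (List.ofFn a) y3
      ≤ ∑ y3 ∈ Finset.univ.image (List.ofFn : (Fin n → Option Bool) → _),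
          Kker ps pe (List.ofFn a) y3 :=
        Finset.sum_le_sum_of_subset_of_nonneg hsub
          (fun y3 _ _ => Kker_nonneg hps hpe hspe _ y3)
    _ = ∑ g : Fin n → Option Bool, Kker ps pe (List.ofFn a) (List.ofFn g) :=
        (Finset.sum_image fun _ _ _ _ h => List.ofFn_injective h)
    _ = ∑ g : Fin n → Option Bool, ∏ i, subErsKernel ps pe (a i) (g i) := by
        simp only [Kker_ofFn]
    _ = ∏ i : Fin n, ∑ c, subErsKernel ps pe (a i) c :=
        sum_pi_prod n _
    _ = 1 := by simp only [W_row_sum]; simp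

lemma Kker_sum_f2_le (hps : 0 ≤ ps) (hpe : 0 ≤ pe) (hspe : ps + pe ≤ 1)
    {n : ℕ} (a : Fin n → Bool) (T3 : Finset (List (Option Bool))) :
    ∑ y3 ∈ T3, f2 (Kker ps pe (List.ofFn a) y3)
      ≤ (n : ℝ) * (f2 pe + f2 ps + f2 (1 - ps - pe)) := by
  have hfil : ∑ y3 ∈ T3.filter (fun l => l.length = n), f2 (Kker ps pe (List.ofFn a) y3)
      = ∑ y3 ∈ T3, f2 (Kker ps pe (List.ofFn a) y3) := by
    refine Finset.sum_filter_of_ne fun y3 _ hne => ?_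
    by_contra hl
    exact hne (by rw [Kker, if_neg (by simpa using hl), f2_zero])
  rw [← hfil]
  have hsub : T3.filter (fun l => l.length = n) ⊆
      Finset.univ.image (List.ofFn : (Fin n → Option Bool) → List (Option Bool)) := by
    intro l hl
    rw [Finset.mem_filter] at hl
    exact Finset.mem_image.2 ⟨fun i => l.get (Fin.cast hl.2.symm i), Finset.mem_univ _,
      (eq_ofFn l n hl.2).symm⟩
  calc ∑ y3 ∈ T3.filter (fun l => l.length = n), f2 (Kker ps pe (List.ofFn a) y3)
      ≤ ∑ y3 ∈ Finset.univ.image (List.ofFn : (Fin n → Option Bool) → _),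
          f2 (Kker ps pe (List.ofFn a) y3) :=
        Finset.sum_le_sum_of_subset_of_nonneg hsub
          (fun y3 _ _ => f2_nonneg (Kker_nonneg hps hpe hspe _ y3)
            (Kker_le_one hps hpe hspe _ y3))
    _ = ∑ g : Fin n → Option Bool, f2 (Kker ps pe (List.ofFn a) (List.ofFn g)) :=
        (Finset.sum_image fun _ _ _ _ h => List.ofFn_injective h)
    _ = ∑ g : Fin n → Option Bool, f2 (∏ i, subErsKernel ps pe (a i) (g i)) := by
        simp only [Kker_ofFn]
    _ = ∑ i : Fin n, ∑ c, f2 (subErsKernel ps pe (a i) c) :=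
        sum_f2_pi n _ (fun i c => W_nonneg hps hpe hspe (a i) c) (fun i => W_row_sum (a i))
    _ = (n : ℝ) * (f2 pe + f2 ps + f2 (1 - ps - pe)) := by
        simp only [W_row_f2, Finset.sum_const, Finset.card_univ, Fintype.card_fin,
          nsmul_eq_mul]

/-- Core inequality: entropy of the output distribution is at most entropy of the input
distribution plus expected length times the per-symbol entropy. -/
lemma core_ineq (hps : 0 ≤ ps) (hpe : 0 ≤ pe) (hspe : ps + pe ≤ 1)
    (T : Finset (List Bool)) (T3 : Finset (List (Option Bool)))
    (p : List Bool → ℝ) (q : List (Option Bool) → ℝ)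
    (hp0 : ∀ y ∈ T, 0 ≤ p y) (hp1 : ∀ y ∈ T, p y ≤ 1)
    (hq : ∀ y3 ∈ T3, q y3 = ∑ y ∈ T, p y * Kker ps pe y y3) :
    ∑ y3 ∈ T3, f2 (q y3) ≤ ∑ y ∈ T, f2 (p y)
      + (∑ y ∈ T, p y * (y.length : ℝ)) * (f2 pe + f2 ps + f2 (1 - ps - pe)) := by
  set H : ℝ := f2 pe + f2 ps + f2 (1 - ps - pe) with hH
  have hK0 : ∀ (y : List Bool) (y3 : List (Option Bool)), 0 ≤ Kker ps pe y y3 :=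
    Kker_nonneg hps hpe hspe
  have step1 : ∑ y3 ∈ T3, f2 (q y3)
      ≤ ∑ y3 ∈ T3, ∑ y ∈ T, f2 (p y * Kker ps pe y y3) := by
    refine Finset.sum_le_sum fun y3 hy3 => ?_
    have hsplit : f2 (q y3) = ∑ y ∈ T, -((p y * Kker ps pe y y3) * Real.logb 2 (q y3)) := by
      rw [f2]
      nth_rewrite 1 [hq y3 hy3]
      rw [Finset.sum_mul, ← Finset.sum_neg_distrib]
    rw [hsplit]
    refine Finset.sum_le_sum fun y hy => ?_
    refine neg_mul_logb_le (mul_nonneg (hp0 y hy) (hK0 y y3)) ?_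
    rw [hq y3 hy3]
    exact Finset.single_le_sum (fun y' hy' => mul_nonneg (hp0 y' hy') (hK0 y' y3)) hy
  have step2 : ∑ y3 ∈ T3, ∑ y ∈ T, f2 (p y * Kker ps pe y y3)
      = ∑ y ∈ T, (f2 (p y) * (∑ y3 ∈ T3, Kker ps pe y y3)
          + p y * (∑ y3 ∈ T3, f2 (Kker ps pe y y3))) := by
    rw [Finset.sum_comm]
    refine Finset.sum_congr rfl fun y hy => ?_
    rw [Finset.mul_sum, Finset.mul_sum, ← Finset.sum_add_distrib]
    refine Finset.sum_congr rfl fun y3 _ => ?_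
    rw [f2_mul (hp0 y hy) (hK0 y y3)]
    ring
  have step3 : ∀ y ∈ T, f2 (p y) * (∑ y3 ∈ T3, Kker ps pe y y3)
      + p y * (∑ y3 ∈ T3, f2 (Kker ps pe y y3))
      ≤ f2 (p y) + p y * ((y.length : ℝ) * H) := by
    intro y hy
    have hf2y : 0 ≤ f2 (p y) := f2_nonneg (hp0 y hy) (hp1 y hy)
    have hs1 : ∑ y3 ∈ T3, Kker ps pe y y3 ≤ 1 := by
      have := Kker_sum_le hps hpe hspe (n := y.length) y.get T3
      rwa [List.ofFn_get] at this
    have hs2 : ∑ y3 ∈ T3, f2 (Kker ps pe y y3) ≤ (y.length : ℝ) * H := by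
      have := Kker_sum_f2_le hps hpe hspe (n := y.length) y.get T3
      rwa [List.ofFn_get] at this
    have h1 : f2 (p y) * (∑ y3 ∈ T3, Kker ps pe y y3) ≤ f2 (p y) * 1 :=
      mul_le_mul_of_nonneg_left hs1 hf2y
    have h2 : p y * (∑ y3 ∈ T3, f2 (Kker ps pe y y3)) ≤ p y * ((y.length : ℝ) * H) :=
      mul_le_mul_of_nonneg_left hs2 (hp0 y hy)
    calc _ ≤ f2 (p y) * 1 + p y * ((y.length : ℝ) * H) := add_le_add h1 h2
    _ = f2 (p y) + p y * ((y.length : ℝ) * H) := by ring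
  calc ∑ y3 ∈ T3, f2 (q y3)
      ≤ ∑ y3 ∈ T3, ∑ y ∈ T, f2 (p y * Kker ps pe y y3) := step1
    _ = ∑ y ∈ T, (f2 (p y) * (∑ y3 ∈ T3, Kker ps pe y y3)
          + p y * (∑ y3 ∈ T3, f2 (Kker ps pe y y3))) := step2
    _ ≤ ∑ y ∈ T, (f2 (p y) + p y * ((y.length : ℝ) * H)) :=
        Finset.sum_le_sum step3
    _ = ∑ y ∈ T, f2 (p y) + (∑ y ∈ T, p y * (y.length : ℝ)) * H := by
        rw [Finset.sum_add_distrib, Finset.sum_mul]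
        congr 1
        refine Finset.sum_congr rfl fun y _ => by ring

end Kernel

lemma pr_mono (μ : FinProb Ω) {E F : Ω → Prop} (h : ∀ ω, E ω → F ω) :
    pr μ E ≤ pr μ F :=
  Finset.sum_le_sum fun ω _ => by
    by_cases hE : E ω <;> by_cases hF : F ω <;> simp [hE, hF, μ.nonneg ω]
    exact absurd (h ω hE) hF

lemma pr_congr (μ : FinProb Ω) {E F : Ω → Prop} (h : ∀ ω, E ω ↔ F ω) :
    pr μ E = pr μ F :=
  Finset.sum_congr rfl fun ω _ => by rw [if_congr (h ω) rfl rfl]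

lemma pr_false (μ : FinProb Ω) {E : Ω → Prop} (h : ∀ ω, ¬ E ω) : pr μ E = 0 := by
  unfold pr
  rw [Finset.sum_eq_zero fun ω _ => by simp [h ω]]

lemma pr_partition {T : Type*} (μ : FinProb Ω) (V : Ω → T) (E : Ω → Prop)
    (s : Finset T) (hs : ∀ ω, V ω ∈ s) :
    pr μ E = ∑ v ∈ s, pr μ (fun ω => E ω ∧ V ω = v) := by
  unfold pr
  rw [Finset.sum_comm]
  refine Finset.sum_congr rfl fun ω _ => ?_
  by_cases hE : E ω
  · simp only [hE, true_and]
    rw [Finset.sum_ite_eq s (V ω) (fun _ => μ.p ω)]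
    simp [hs ω]
  · simp [hE]

lemma single_le_pr (μ : FinProb Ω) {E : Ω → Prop} {ω : Ω} (h : E ω) : μ.p ω ≤ pr μ E := by
  unfold pr
  have := Finset.single_le_sum (f := fun ω' => if E ω' then μ.p ω' else 0)
    (fun ω' _ => by by_cases hE : E ω' <;> simp [hE, μ.nonneg ω']) (Finset.mem_univ ω)
  simpa [h] using this

lemma assemble {Ω S : Type*} [Fintype Ω] (μ : FinProb Ω)
    {ps pe : ℝ} (hps : 0 ≤ ps) (hpe : 0 ≤ pe) (hspe : ps + pe ≤ 1)
    (X : Ω → S) (Y : Ω → List Bool) (Y3 : Ω → List (Option Bool))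
    (hlen : ∀ ω, (Y3 ω).length = (Y ω).length)
    (hcond : ∀ (x : S) (n : ℕ) (y : Fin n → Bool) (y' : Fin n → Option Bool),
      0 < pr μ (fun ω => X ω = x ∧ Y ω = List.ofFn y) →
      pr μ (fun ω => Y3 ω = List.ofFn y' ∧ X ω = x ∧ Y ω = List.ofFn y) /
        pr μ (fun ω => X ω = x ∧ Y ω = List.ofFn y) = ∏ i, subErsKernel ps pe (y i) (y' i))
    (H : ℝ) (hH : H = f2 pe + f2 ps + f2 (1 - ps - pe))
    (T : Finset (List Bool)) (T3 : Finset (List (Option Bool))) (F : Finset S)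
    (hTc : ∀ ω, Y ω ∈ T)
    (hFpos : ∀ x ∈ F, 0 < pr μ (fun ω => X ω = x))
    (hF0 : ∀ ω, X ω ∉ F → μ.p ω = 0) :
    ∑ x ∈ F, pr μ (fun ω => X ω = x) *
      (-∑ y3 ∈ T3, (pr μ (fun ω => Y3 ω = y3 ∧ X ω = x) / pr μ (fun ω => X ω = x)) *
          Real.logb 2 (pr μ (fun ω => Y3 ω = y3 ∧ X ω = x) / pr μ (fun ω => X ω = x)))
    ≤ (∑ x ∈ F, pr μ (fun ω => X ω = x) *
      (-∑ y ∈ T, (pr μ (fun ω => Y ω = y ∧ X ω = x) / pr μ (fun ω => X ω = x)) *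
          Real.logb 2 (pr μ (fun ω => Y ω = y ∧ X ω = x) / pr μ (fun ω => X ω = x))))
      + expLen μ Y * H := by
  classical
  -- the joint probability factorizes through the kernel, for `Y`-values in `ofFn` form
  have joint' : ∀ (x : S) (n : ℕ) (a : Fin n → Bool) (y3 : List (Option Bool)),
      pr μ (fun ω => Y3 ω = y3 ∧ X ω = x ∧ Y ω = List.ofFn a)
        = pr μ (fun ω => X ω = x ∧ Y ω = List.ofFn a) * Kker ps pe (List.ofFn a) y3 := by
    intro x n a y3
    by_cases hxy : 0 < pr μ (fun ω => X ω = x ∧ Y ω = List.ofFn a)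
    · by_cases hl : y3.length = n
      · set g : Fin n → Option Bool := fun i => y3.get (Fin.cast hl.symm i) with hg
        have hy3 : y3 = List.ofFn g := eq_ofFn y3 n hl
        have h1 := hcond x n a g hxy
        rw [← hy3] at h1
        rw [div_eq_iff hxy.ne'] at h1
        have h2 : Kker ps pe (List.ofFn a) y3 = ∏ i, subErsKernel ps pe (a i) (g i) := by
          conv_lhs => rw [hy3]
          exact Kker_ofFn a g
        rw [h1, h2]
        ring
      · have hzero : pr μ (fun ω => Y3 ω = y3 ∧ X ω = x ∧ Y ω = List.ofFn a) = 0 := by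
          refine pr_false μ fun ω hω => ?_
          apply hl
          rw [← hω.1] at *
          have := hlen ω
          rw [hω.2.2] at this
          simpa using this
        rw [hzero, Kker, if_neg (by simpa using hl)]
        ring
    · have h0 : pr μ (fun ω => X ω = x ∧ Y ω = List.ofFn a) = 0 :=
        le_antisymm (not_lt.1 hxy) (pr_nonneg μ _)
      have h1 : pr μ (fun ω => Y3 ω = y3 ∧ X ω = x ∧ Y ω = List.ofFn a) = 0 := by
        refine le_antisymm ?_ (pr_nonneg μ _)
        calc pr μ (fun ω => Y3 ω = y3 ∧ X ω = x ∧ Y ω = List.ofFn a)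
            ≤ pr μ (fun ω => X ω = x ∧ Y ω = List.ofFn a) := pr_mono μ fun ω hω => hω.2
          _ = 0 := h0
      rw [h0, h1]
      ring
  have joint : ∀ (x : S) (y : List Bool) (y3 : List (Option Bool)),
      pr μ (fun ω => Y3 ω = y3 ∧ X ω = x ∧ Y ω = y)
        = pr μ (fun ω => X ω = x ∧ Y ω = y) * Kker ps pe y y3 := by
    intro x y y3
    have := joint' x y.length y.get y3
    rwa [List.ofFn_get] at this
  -- marginal of the output given x
  have marginal : ∀ (x : S) (y3 : List (Option Bool)),
      pr μ (fun ω => Y3 ω = y3 ∧ X ω = x)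
        = ∑ y ∈ T, pr μ (fun ω => Y ω = y ∧ X ω = x) * Kker ps pe y y3 := by
    intro x y3
    rw [pr_partition μ Y (fun ω => Y3 ω = y3 ∧ X ω = x) T hTc]
    refine Finset.sum_congr rfl fun y _ => ?_
    rw [pr_congr μ (F := fun ω => Y3 ω = y3 ∧ X ω = x ∧ Y ω = y) (fun ω => by tauto),
      joint x y y3, pr_congr μ (F := fun ω => Y ω = y ∧ X ω = x) (fun ω => by tauto)]
  -- the per-x inequality
  have perx : ∀ x ∈ F,
      (-∑ y3 ∈ T3, (pr μ (fun ω => Y3 ω = y3 ∧ X ω = x) / pr μ (fun ω => X ω = x)) *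
          Real.logb 2 (pr μ (fun ω => Y3 ω = y3 ∧ X ω = x) / pr μ (fun ω => X ω = x)))
      ≤ (-∑ y ∈ T, (pr μ (fun ω => Y ω = y ∧ X ω = x) / pr μ (fun ω => X ω = x)) *
          Real.logb 2 (pr μ (fun ω => Y ω = y ∧ X ω = x) / pr μ (fun ω => X ω = x)))
        + (∑ y ∈ T, (pr μ (fun ω => Y ω = y ∧ X ω = x) / pr μ (fun ω => X ω = x))
            * (y.length : ℝ)) * H := by
    intro x hx
    have hPx : 0 < pr μ (fun ω => X ω = x) := hFpos x hx
    set Px := pr μ (fun ω => X ω = x) with hPx'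
    have key := core_ineq hps hpe hspe T T3
      (fun y => pr μ (fun ω => Y ω = y ∧ X ω = x) / Px)
      (fun y3 => pr μ (fun ω => Y3 ω = y3 ∧ X ω = x) / Px)
      (fun y _ => div_nonneg (pr_nonneg μ _) hPx.le)
      (fun y _ => (div_le_one hPx).2 (pr_mono μ fun ω hω => hω.2))
      (fun y3 _ => by
        beta_reduce
        rw [marginal x y3, Finset.sum_div]
        refine Finset.sum_congr rfl fun y _ => ?_
        ring)
    rw [← hH] at key
    calc (-∑ y3 ∈ T3, (pr μ (fun ω => Y3 ω = y3 ∧ X ω = x) / Px) *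
          Real.logb 2 (pr μ (fun ω => Y3 ω = y3 ∧ X ω = x) / Px))
        = ∑ y3 ∈ T3, f2 (pr μ (fun ω => Y3 ω = y3 ∧ X ω = x) / Px) := by
          rw [← Finset.sum_neg_distrib]
          simp only [f2]
      _ ≤ (∑ y ∈ T, f2 (pr μ (fun ω => Y ω = y ∧ X ω = x) / Px))
          + (∑ y ∈ T, (pr μ (fun ω => Y ω = y ∧ X ω = x) / Px) * (y.length : ℝ)) * H := key
      _ = _ := by
          rw [← Finset.sum_neg_distrib]
          simp only [f2]
  -- expected length identities
  have explen_x : ∀ x : S, ∑ y ∈ T, pr μ (fun ω => Y ω = y ∧ X ω = x) * (y.length : ℝ)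
      = ∑ ω, (if X ω = x then μ.p ω * ((Y ω).length : ℝ) else 0) := by
    intro x
    unfold pr
    simp only [Finset.sum_mul]
    rw [Finset.sum_comm]
    refine Finset.sum_congr rfl fun ω _ => ?_
    by_cases hX : X ω = x
    · simp only [hX, and_true]
      have hite : ∀ y : List Bool, (if Y ω = y then μ.p ω else 0) * (y.length : ℝ)
          = if Y ω = y then μ.p ω * (y.length : ℝ) else 0 := fun y => by
        split <;> simp
      simp only [hite]
      rw [Finset.sum_ite_eq T (Y ω) (fun y => μ.p ω * (y.length : ℝ))]
      simp [hTc ω]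
    · simp [hX]
  have hexp : ∑ x ∈ F, ∑ y ∈ T, pr μ (fun ω => Y ω = y ∧ X ω = x) * (y.length : ℝ)
      = expLen μ Y := by
    rw [Finset.sum_congr rfl fun x _ => explen_x x, Finset.sum_comm]
    refine Finset.sum_congr rfl fun ω _ => ?_
    rw [Finset.sum_ite_eq F (X ω) (fun _ => μ.p ω * ((Y ω).length : ℝ))]
    by_cases hXF : X ω ∈ F
    · simp [hXF]
    · simp [hXF, hF0 ω hXF]
  -- final assembly
  calc ∑ x ∈ F, pr μ (fun ω => X ω = x) *
      (-∑ y3 ∈ T3, (pr μ (fun ω => Y3 ω = y3 ∧ X ω = x) / pr μ (fun ω => X ω = x)) *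
          Real.logb 2 (pr μ (fun ω => Y3 ω = y3 ∧ X ω = x) / pr μ (fun ω => X ω = x)))
      ≤ ∑ x ∈ F, pr μ (fun ω => X ω = x) *
        ((-∑ y ∈ T, (pr μ (fun ω => Y ω = y ∧ X ω = x) / pr μ (fun ω => X ω = x)) *
          Real.logb 2 (pr μ (fun ω => Y ω = y ∧ X ω = x) / pr μ (fun ω => X ω = x)))
        + (∑ y ∈ T, (pr μ (fun ω => Y ω = y ∧ X ω = x) / pr μ (fun ω => X ω = x))
            * (y.length : ℝ)) * H) :=
      Finset.sum_le_sum fun x hx =>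
        mul_le_mul_of_nonneg_left (perx x hx) (pr_nonneg μ _)
    _ = (∑ x ∈ F, pr μ (fun ω => X ω = x) *
      (-∑ y ∈ T, (pr μ (fun ω => Y ω = y ∧ X ω = x) / pr μ (fun ω => X ω = x)) *
          Real.logb 2 (pr μ (fun ω => Y ω = y ∧ X ω = x) / pr μ (fun ω => X ω = x))))
        + (∑ x ∈ F, ∑ y ∈ T, pr μ (fun ω => Y ω = y ∧ X ω = x) * (y.length : ℝ)) * H := by
        rw [Finset.sum_mul, ← Finset.sum_add_distrib]
        refine Finset.sum_congr rfl fun x hx => ?_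
        have hPx : pr μ (fun ω => X ω = x) ≠ 0 := (hFpos x hx).ne'
        have hPxA : pr μ (fun ω => X ω = x) *
            (∑ y ∈ T, (pr μ (fun ω => Y ω = y ∧ X ω = x) / pr μ (fun ω => X ω = x))
              * (y.length : ℝ))
            = ∑ y ∈ T, pr μ (fun ω => Y ω = y ∧ X ω = x) * (y.length : ℝ) := by
          rw [Finset.mul_sum]
          refine Finset.sum_congr rfl fun y _ => ?_
          field_simp
        rw [mul_add, ← mul_assoc, hPxA]
    _ = _ := by rw [hexp]

/-- for the substitution/erasure kernel,
`H(Y⁽³⁾|X) ≤ H(Y|X) + E[|Y|]·H(pe, ps, 1−pe−ps)`. -/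
theorem stmt10 {Ω S : Type*} [Fintype Ω] (μ : FinProb Ω)
    (ps pe : ℝ) (hps : 0 ≤ ps) (hpe : 0 ≤ pe) (hspe : ps + pe ≤ 1)
    (X : Ω → S) (Y : Ω → List Bool) (Y3 : Ω → List (Option Bool))
    (hlen : ∀ ω, (Y3 ω).length = (Y ω).length)
    (hcond : ∀ (x : S) (n : ℕ) (y : Fin n → Bool) (y' : Fin n → Option Bool),
      0 < pr μ (fun ω => X ω = x ∧ Y ω = List.ofFn y) →
      pr μ (fun ω => Y3 ω = List.ofFn y' ∧ X ω = x ∧ Y ω = List.ofFn y) /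
        pr μ (fun ω => X ω = x ∧ Y ω = List.ofFn y) = ∏ i, subErsKernel ps pe (y i) (y' i)) :
    condEntropy μ Y3 X ≤ condEntropy μ Y X +
      expLen μ Y * (-(pe * Real.logb 2 pe) - ps * Real.logb 2 ps -
        (1 - ps - pe) * Real.logb 2 (1 - ps - pe)) := by
  unfold condEntropy
  refine assemble μ hps hpe hspe X Y Y3 hlen hcond _ (by simp only [f2]; ring) _ _ _
    (fun ω => ?_) (fun x hx => (Finset.mem_filter.1 hx).2) (fun ω hω => ?_)
  case refine_1 =>
    simp only [Finset.mem_image]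
    exact ⟨ω, Finset.mem_univ ω, rfl⟩
  have hPx : pr μ (fun ω' => X ω' = X ω) = 0 := by
    by_contra hne
    exact hω (Finset.mem_filter.2 ⟨Finset.mem_image.2 ⟨ω, Finset.mem_univ ω, rfl⟩,
      lt_of_le_of_ne (pr_nonneg μ _) (Ne.symm hne)⟩)
  have h1 : μ.p ω ≤ pr μ (fun ω' => X ω' = X ω) := single_le_pr μ rfl
  exact le_antisymm (hPx ▸ h1) (μ.nonneg ω)

end
end
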